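/- arXiv:2510.14044 — 2 statements merged into one kernel-verified Lean document; each statement's English description precedes it below -/
import Mathlib

section
/- Let X be an N×q real matrix, X_j its j-th column, X_{−j} the matrix of remaining columns, λ > 0, and γ̂ ∈ ℝ^{q−1} a minimizer of γ ↦ (1/(2N))‖X_j − X_{−j}γ‖₂² + λ‖γ‖₁. Define τ̂² = (1/N)‖X_j − X_{−j}γ̂‖₂² + λ‖γ̂‖₁ and let Θ̂_j be the row vector with j-th entry 1/τ̂² and ℓ-th entry −γ̂_ℓ/τ̂² for ℓ ≠ j. If τ̂² > 0, then (1/N)·X_jᵀ X Θ̂_jᵀ = 1. -/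
lemma quad_min (a b : ℝ) (ha : 0 ≤ a)
    (h : ∀ s : ℝ, 0 ≤ s → a + b ≤ a * s ^ 2 + b * s) : 2 * a + b = 0 := by
  by_contra hd
  have ha1 : (0:ℝ) < a + 1 := by linarith
  rcases lt_or_gt_of_ne hd with hlt | hgt
  · set t : ℝ := (-(2*a+b))/(a+1) with htdef
    have htpos : 0 < t := div_pos (by linarith) ha1
    have ht : (a+1) * t = -(2*a+b) := by
      rw [htdef, mul_comm, div_mul_cancel₀ _ (ne_of_gt ha1)]
    have key := h (1 + t) (by linarith)
    nlinarith [sq_nonneg t, mul_pos htpos htpos]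
  · set t : ℝ := (2*a+b)/(a+1+(2*a+b)) with htdef
    have hden : (0:ℝ) < a+1+(2*a+b) := by linarith
    have htpos : 0 < t := div_pos (by linarith) hden
    have htlt : t < 1 := by
      rw [htdef, div_lt_one hden]; linarith
    have ht : (a+1+(2*a+b)) * t = (2*a+b) := by
      rw [htdef, mul_comm, div_mul_cancel₀ _ (ne_of_gt hden)]
    have key := h (1 - t) (by linarith)
    nlinarith [sq_nonneg t, mul_pos htpos htpos]

/-- Nodewise-regression normalization identity: if `γ̂` minimizes the lasso
objective `γ ↦ (1/(2N))‖X_j − X_{−j}γ‖₂² + λ‖γ‖₁`, and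
`τ̂² = (1/N)‖X_j − X_{−j}γ̂‖₂² + λ‖γ̂‖₁ > 0`, then the rescaled coefficient row
`Θ̂_j` (with `j`-th entry `1/τ̂²` and `ℓ`-th entry `−γ̂_ℓ/τ̂²` for `ℓ ≠ j`)
satisfies `(1/N)·X_jᵀ X Θ̂_jᵀ = 1`. -/
theorem nodewise_normalization (N q : ℕ) (hN : 0 < N)
    (X : Matrix (Fin N) (Fin q) ℝ) (j : Fin q) (lam : ℝ) (hlam : 0 < lam)
    (γhat : {ℓ : Fin q // ℓ ≠ j} → ℝ)
    (hmin : ∀ γ : {ℓ : Fin q // ℓ ≠ j} → ℝ,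
      (1 / (2 * N)) * ∑ t, (X t j - ∑ ℓ, X t ℓ.1 * γhat ℓ) ^ 2
          + lam * ∑ ℓ, |γhat ℓ|
        ≤ (1 / (2 * N)) * ∑ t, (X t j - ∑ ℓ, X t ℓ.1 * γ ℓ) ^ 2
          + lam * ∑ ℓ, |γ ℓ|)
    (τsq : ℝ)
    (hτ : τsq = (1 / N) * ∑ t, (X t j - ∑ ℓ, X t ℓ.1 * γhat ℓ) ^ 2
          + lam * ∑ ℓ, |γhat ℓ|)
    (hτpos : 0 < τsq)
    (Θhat : Fin q → ℝ)
    (hΘ : ∀ ℓ : Fin q, Θhat ℓ = if h : ℓ = j then 1 / τsq else -γhat ⟨ℓ, h⟩ / τsq) :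
    (1 / N) * ∑ t, X t j * (∑ ℓ, X t ℓ * Θhat ℓ) = 1 := by
  have hNR : (0:ℝ) < (N:ℝ) := by exact_mod_cast hN
  set v : Fin N → ℝ := fun t => ∑ ℓ : {ℓ : Fin q // ℓ ≠ j}, X t ℓ.1 * γhat ℓ with hv
  set A : ℝ := ∑ ℓ, |γhat ℓ| with hAdef
  have hA : 0 ≤ A := Finset.sum_nonneg fun ℓ _ => abs_nonneg _
  have e1 : ∀ s : ℝ, ∑ t, (X t j - s * v t) ^ 2
      = ∑ t, X t j ^ 2 - 2 * s * ∑ t, X t j * v t + s ^ 2 * ∑ t, v t ^ 2 := by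
    intro s
    rw [Finset.mul_sum, Finset.mul_sum, ← Finset.sum_sub_distrib, ← Finset.sum_add_distrib]
    exact Finset.sum_congr rfl fun t _ => by ring
  have hL : ∑ t, (X t j - ∑ ℓ : {ℓ : Fin q // ℓ ≠ j}, X t ℓ.1 * γhat ℓ) ^ 2
      = ∑ t, (X t j - 1 * v t) ^ 2 :=
    Finset.sum_congr rfl fun t _ => by simp [hv]
  have hscale : ∀ s : ℝ, 0 ≤ s →
      ((1:ℝ) / (2*N)) * ∑ t, v t ^ 2 + ((lam * A) - (1/N) * ∑ t, X t j * v t)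
        ≤ (((1:ℝ) / (2*N)) * ∑ t, v t ^ 2) * s ^ 2
          + ((lam * A) - (1/N) * ∑ t, X t j * v t) * s := by
    intro s hs
    have h1 := hmin (fun ℓ => s * γhat ℓ)
    have hvs : ∀ t, (∑ ℓ : {ℓ : Fin q // ℓ ≠ j}, X t ℓ.1 * (s * γhat ℓ)) = s * v t := by
      intro t
      rw [hv, Finset.mul_sum]
      exact Finset.sum_congr rfl fun ℓ _ => by ring
    have habs : (∑ ℓ : {ℓ : Fin q // ℓ ≠ j}, |s * γhat ℓ|) = s * A := by
      rw [hAdef, Finset.mul_sum]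
      exact Finset.sum_congr rfl fun ℓ _ => by rw [abs_mul, abs_of_nonneg hs]
    simp only [hvs, habs] at h1
    rw [hL, e1 s, e1 1] at h1
    have hhalf : (1:ℝ)/((N:ℝ)) = 2 * (1/(2*(N:ℝ))) := by
      field_simp
    rw [hhalf]
    nlinarith [h1]
  have hKKT := quad_min _ _ (by positivity) hscale
  have hrow : ∀ t, (∑ ℓ, X t ℓ * Θhat ℓ) = (X t j - v t) / τsq := by
    intro t
    rw [← Finset.sum_erase_add _ _ (Finset.mem_univ j)]
    have hsub : ∑ ℓ ∈ Finset.univ.erase j, X t ℓ * Θhat ℓ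
        = ∑ ℓ : {ℓ : Fin q // ℓ ≠ j}, X t ℓ.1 * Θhat ℓ.1 :=
      Finset.sum_subtype _ (by simp) _
    have h2 : ∑ ℓ : {ℓ : Fin q // ℓ ≠ j}, X t ℓ.1 * Θhat ℓ.1
        = (∑ ℓ : {ℓ : Fin q // ℓ ≠ j}, X t ℓ.1 * γhat ℓ) * (-1/τsq) := by
      rw [Finset.sum_mul]
      exact Finset.sum_congr rfl fun ℓ _ => by rw [hΘ ℓ.1, dif_neg ℓ.2]; ring
    have hvt : v t = ∑ ℓ : {ℓ : Fin q // ℓ ≠ j}, X t ℓ.1 * γhat ℓ := rfl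
    rw [hsub, h2, hΘ j, dif_pos rfl, ← hvt]
    field_simp
    ring
  simp only [hrow]
  have e2 : ∑ t, X t j * ((X t j - v t) / τsq)
      = (∑ t, X t j ^ 2 - ∑ t, X t j * v t) / τsq := by
    rw [← Finset.sum_sub_distrib, Finset.sum_div]
    exact Finset.sum_congr rfl fun t _ => by ring
  rw [e2]
  have hτ2 : τsq = (1/(N:ℝ)) * (∑ t, X t j ^ 2 - 2 * 1 * ∑ t, X t j * v t
      + 1 ^ 2 * ∑ t, v t ^ 2) + lam * A := by
    rw [hτ, ← e1 1, ← hL]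
  have hτne : τsq ≠ 0 := ne_of_gt hτpos
  have hNne : ((N:ℝ)) ≠ 0 := ne_of_gt hNR
  have key : ∑ t, X t j ^ 2 - ∑ t, X t j * v t = (N:ℝ) * τsq := by
    field_simp at hKKT hτ2
    nlinarith [hKKT, hτ2]
  rw [key]
  field_simp
end

section
/- With the nodewise regression quantities as above (γ̂ a lasso minimizer, τ̂² > 0, Θ̂_j the rescaled coefficient row), every coordinate of the vector e_j − Σ̂ Θ̂_jᵀ, where Σ̂ = (1/N)XᵀX, is bounded in absolute value by λ/τ̂². That is, ‖e_j − Σ̂ Θ̂_jᵀ‖_∞ ≤ λ/τ̂². -/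
private lemma aux_lim (a b C : ℝ) (h : ∀ ε : ℝ, 0 < ε → ε < 1 → a ≤ b + ε * C) : a ≤ b := by
  refine le_of_forall_pos_le_add fun δ hδ => ?_
  have hC : (0:ℝ) ≤ |C| := abs_nonneg C
  set ε := min (1/2) (δ/(|C|+1)) with hε
  have hε0 : 0 < ε := lt_min (by norm_num) (by positivity)
  have hε1 : ε < 1 := lt_of_le_of_lt (min_le_left _ _) (by norm_num)
  have h1 := h ε hε0 hε1
  have h2 : ε * C ≤ ε * |C| := mul_le_mul_of_nonneg_left (le_abs_self C) hε0.le
  have h3 : ε ≤ δ/(|C|+1) := min_le_right _ _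
  have h4 : ε * |C| ≤ (δ/(|C|+1)) * (|C|+1) := by
    apply mul_le_mul h3 (by linarith) hC (by positivity)
  rw [div_mul_cancel₀ _ (by positivity : |C| + (1:ℝ) ≠ 0)] at h4
  linarith

private lemma sum_split_ne {q : ℕ} (j : Fin q) (f : Fin q → ℝ) :
    ∑ m, f m = f j + ∑ ℓ : {ℓ : Fin q // ℓ ≠ j}, f ℓ.1 := by
  rw [← Finset.sum_subtype (Finset.univ.erase j) (fun x => by simp) f]
  exact (Finset.add_sum_erase _ f (Finset.mem_univ j)).symm

set_option maxHeartbeats 1000000 in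
/-- Nodewise-regression KKT bound: with `γ̂` a lasso minimizer, `τ̂² > 0`, and
`Θ̂_j` the rescaled coefficient row, every coordinate of `e_j − Σ̂ Θ̂_jᵀ`
(where `Σ̂ = (1/N)XᵀX`) is bounded in absolute value by `λ/τ̂²`. -/
theorem nodewise_kkt_bound (N q : ℕ) (hN : 0 < N)
    (X : Matrix (Fin N) (Fin q) ℝ) (j : Fin q) (lam : ℝ) (hlam : 0 < lam)
    (γhat : {ℓ : Fin q // ℓ ≠ j} → ℝ)
    (hmin : ∀ γ : {ℓ : Fin q // ℓ ≠ j} → ℝ,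
      (1 / (2 * N)) * ∑ t, (X t j - ∑ ℓ, X t ℓ.1 * γhat ℓ) ^ 2
          + lam * ∑ ℓ, |γhat ℓ|
        ≤ (1 / (2 * N)) * ∑ t, (X t j - ∑ ℓ, X t ℓ.1 * γ ℓ) ^ 2
          + lam * ∑ ℓ, |γ ℓ|)
    (τsq : ℝ)
    (hτ : τsq = (1 / N) * ∑ t, (X t j - ∑ ℓ, X t ℓ.1 * γhat ℓ) ^ 2
          + lam * ∑ ℓ, |γhat ℓ|)
    (hτpos : 0 < τsq)
    (Θhat : Fin q → ℝ)
    (hΘ : ∀ ℓ : Fin q, Θhat ℓ = if h : ℓ = j then 1 / τsq else -γhat ⟨ℓ, h⟩ / τsq) :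
    ∀ ℓ : Fin q,
      |(if ℓ = j then (1 : ℝ) else 0)
          - ∑ m, ((1 / N) * ∑ t, X t ℓ * X t m) * Θhat m| ≤ lam / τsq := by
  have hN' : (0:ℝ) < N := by exact_mod_cast hN
  set r : Fin N → ℝ := fun t => X t j - ∑ ℓ, X t ℓ.1 * γhat ℓ with hr
  -- perturbation inequality
  have hpert : ∀ (d : {ℓ : Fin q // ℓ ≠ j} → ℝ) (ε : ℝ),
      0 ≤ (1/(2*(N:ℝ))) * (ε^2 * ∑ t, (∑ ℓ, X t ℓ.1 * d ℓ)^2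
            - 2*ε * ∑ t, r t * (∑ ℓ, X t ℓ.1 * d ℓ))
          + lam * ((∑ ℓ, |γhat ℓ + ε * d ℓ|) - ∑ ℓ, |γhat ℓ|) := by
    intro d ε
    have h := hmin (fun ℓ => γhat ℓ + ε * d ℓ)
    have h2 : ∀ t ∈ Finset.univ, (X t j - ∑ ℓ, X t ℓ.1 * (γhat ℓ + ε * d ℓ))^2
        = (r t)^2 - (2*ε) * (r t * (∑ ℓ, X t ℓ.1 * d ℓ))
          + ε^2 * ((∑ ℓ, X t ℓ.1 * d ℓ))^2 := by
      intro t _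
      have e : ∑ ℓ, X t ℓ.1 * (γhat ℓ + ε * d ℓ)
          = (∑ ℓ, X t ℓ.1 * γhat ℓ) + ε * ∑ ℓ, X t ℓ.1 * d ℓ := by
        rw [Finset.mul_sum, ← Finset.sum_add_distrib]
        exact Finset.sum_congr rfl fun ℓ _ => by ring
      rw [e]; simp only [hr]; ring
    rw [Finset.sum_congr rfl h2, Finset.sum_add_distrib, Finset.sum_sub_distrib,
      ← Finset.mul_sum, ← Finset.mul_sum] at h
    have hbase : ∑ t, (X t j - ∑ ℓ, X t ℓ.1 * γhat ℓ) ^ 2 = ∑ t, (r t)^2 := rfl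
    rw [hbase] at h
    have key : (1/(2*(N:ℝ))) * (ε^2 * ∑ t, (∑ ℓ, X t ℓ.1 * d ℓ)^2
            - 2*ε * ∑ t, r t * (∑ ℓ, X t ℓ.1 * d ℓ))
          + lam * ((∑ ℓ, |γhat ℓ + ε * d ℓ|) - ∑ ℓ, |γhat ℓ|)
        = ((1 / (2 * N)) * (∑ t, (r t)^2 - (2*ε) * ∑ t, r t * (∑ ℓ, X t ℓ.1 * d ℓ)
              + ε^2 * ∑ t, (∑ ℓ, X t ℓ.1 * d ℓ)^2)
            + lam * ∑ ℓ, |γhat ℓ + ε * d ℓ|)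
          - ((1 / (2 * N)) * ∑ t, (r t)^2 + lam * ∑ ℓ, |γhat ℓ|) := by ring
    rw [key]
    exact sub_nonneg.mpr h
  -- KKT bound for off-coordinates
  have hkkt : ∀ ℓ₀ : {ℓ : Fin q // ℓ ≠ j},
      |(1/(N:ℝ)) * ∑ t, X t ℓ₀.1 * r t| ≤ lam := by
    intro ℓ₀
    have main : ∀ c : ℝ, |c| = 1 → c * ((1/(N:ℝ)) * ∑ t, X t ℓ₀.1 * r t) ≤ lam := by
      intro c hc
      have hc2 : c^2 = 1 := by rw [← sq_abs, hc, one_pow]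
      refine aux_lim _ _ ((1/(2*(N:ℝ))) * ∑ t, (X t ℓ₀.1)^2) fun ε hε hε1 => ?_
      have h := hpert (fun ℓ => if ℓ = ℓ₀ then c else 0) ε
      have hu : ∀ t, (∑ ℓ, X t ℓ.1 * (if ℓ = ℓ₀ then c else 0)) = c * X t ℓ₀.1 := by
        intro t
        simp [mul_ite, mul_zero, Finset.sum_ite_eq', mul_comm]
      simp only [hu] at h
      have habs : ∑ ℓ, |γhat ℓ + ε * (if ℓ = ℓ₀ then c else 0)|
          ≤ (∑ ℓ, |γhat ℓ|) + ε := by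
        have hb : ∀ ℓ ∈ Finset.univ, |γhat ℓ + ε * (if ℓ = ℓ₀ then c else 0)|
            ≤ |γhat ℓ| + (if ℓ = ℓ₀ then ε else 0) := by
          intro ℓ _
          by_cases hℓ : ℓ = ℓ₀
          · simp only [hℓ, if_pos rfl]
            calc |γhat ℓ₀ + ε * c| ≤ |γhat ℓ₀| + |ε * c| := abs_add_le _ _
              _ = |γhat ℓ₀| + ε := by rw [abs_mul, hc, mul_one, abs_of_pos hε]
          · simp [hℓ]
        calc ∑ ℓ, |γhat ℓ + ε * (if ℓ = ℓ₀ then c else 0)|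
            ≤ ∑ ℓ, (|γhat ℓ| + (if ℓ = ℓ₀ then ε else 0)) := Finset.sum_le_sum hb
          _ = (∑ ℓ, |γhat ℓ|) + ε := by rw [Finset.sum_add_distrib]; simp
      have h2 : 0 ≤ (1/(2*(N:ℝ))) * (ε^2 * ∑ t, (c * X t ℓ₀.1)^2
            - 2*ε * ∑ t, r t * (c * X t ℓ₀.1)) + lam * ε := by
        have := mul_le_mul_of_nonneg_left (by linarith : (∑ ℓ, |γhat ℓ + ε * (if ℓ = ℓ₀ then c else 0)|) - ∑ ℓ, |γhat ℓ| ≤ ε) hlam.le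
        linarith
      have e1 : ∑ t, (c * X t ℓ₀.1)^2 = ∑ t, (X t ℓ₀.1)^2 :=
        Finset.sum_congr rfl fun t _ => by rw [mul_pow, hc2, one_mul]
      have e2 : ∑ t, r t * (c * X t ℓ₀.1) = c * ∑ t, X t ℓ₀.1 * r t := by
        rw [Finset.mul_sum]; exact Finset.sum_congr rfl fun t _ => by ring
      rw [e1, e2] at h2
      have key : (1/(2*(N:ℝ))) * (ε^2 * ∑ t, (X t ℓ₀.1)^2
            - 2*ε * (c * ∑ t, X t ℓ₀.1 * r t)) + lam * ε
          = ε * ((lam + ε * ((1/(2*(N:ℝ))) * ∑ t, (X t ℓ₀.1)^2))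
              - c * ((1/(N:ℝ)) * ∑ t, X t ℓ₀.1 * r t)) := by
        field_simp
        ring
      rw [key] at h2
      nlinarith [h2]
    rw [abs_le]
    constructor
    · have := main (-1) (by norm_num); linarith
    · have := main 1 (by norm_num); linarith
  -- A = L
  have hAL : (1/(N:ℝ)) * ∑ t, r t * (∑ ℓ, X t ℓ.1 * γhat ℓ) = lam * ∑ ℓ, |γhat ℓ| := by
    have hCu : (0:ℝ) ≤ (1/(2*(N:ℝ))) * ∑ t, (∑ ℓ, X t ℓ.1 * γhat ℓ)^2 := by positivity
    have hle : (1/(N:ℝ)) * ∑ t, r t * (∑ ℓ, X t ℓ.1 * γhat ℓ) ≤ lam * ∑ ℓ, |γhat ℓ| := by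
      refine aux_lim _ _ ((1/(2*(N:ℝ))) * ∑ t, (∑ ℓ, X t ℓ.1 * γhat ℓ)^2) fun ε hε hε1 => ?_
      have h := hpert γhat ε
      have habs : ∑ ℓ, |γhat ℓ + ε * γhat ℓ| = (1+ε) * ∑ ℓ, |γhat ℓ| := by
        rw [Finset.mul_sum]
        refine Finset.sum_congr rfl fun ℓ _ => ?_
        rw [← abs_of_pos (by linarith : (0:ℝ) < 1 + ε), ← abs_mul]
        congr 1; ring
      rw [habs] at h
      have key : (1/(2*(N:ℝ))) * (ε^2 * ∑ t, (∑ ℓ, X t ℓ.1 * γhat ℓ)^2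
            - 2*ε * ∑ t, r t * (∑ ℓ, X t ℓ.1 * γhat ℓ))
          + lam * ((1+ε) * ∑ ℓ, |γhat ℓ| - ∑ ℓ, |γhat ℓ|)
          = ε * ((lam * ∑ ℓ, |γhat ℓ|
              + ε * ((1/(2*(N:ℝ))) * ∑ t, (∑ ℓ, X t ℓ.1 * γhat ℓ)^2))
              - (1/(N:ℝ)) * ∑ t, r t * (∑ ℓ, X t ℓ.1 * γhat ℓ)) := by
        field_simp
        ring
      rw [key] at h
      nlinarith [h]
    have hge : lam * ∑ ℓ, |γhat ℓ| ≤ (1/(N:ℝ)) * ∑ t, r t * (∑ ℓ, X t ℓ.1 * γhat ℓ) := by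
      refine aux_lim _ _ ((1/(2*(N:ℝ))) * ∑ t, (∑ ℓ, X t ℓ.1 * γhat ℓ)^2) fun ε hε hε1 => ?_
      have h := hpert (fun ℓ => -γhat ℓ) ε
      have hu : ∀ t, (∑ ℓ, X t ℓ.1 * -γhat ℓ) = -(∑ ℓ, X t ℓ.1 * γhat ℓ) := by
        intro t; rw [← Finset.sum_neg_distrib]
        exact Finset.sum_congr rfl fun ℓ _ => by ring
      simp only [hu] at h
      have habs : ∑ ℓ, |γhat ℓ + ε * -γhat ℓ| = (1-ε) * ∑ ℓ, |γhat ℓ| := by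
        rw [Finset.mul_sum]
        refine Finset.sum_congr rfl fun ℓ _ => ?_
        rw [← abs_of_pos (by linarith : (0:ℝ) < 1 - ε), ← abs_mul]
        congr 1; ring
      rw [habs] at h
      have key : (1/(2*(N:ℝ))) * (ε^2 * ∑ t, (-(∑ ℓ, X t ℓ.1 * γhat ℓ))^2
            - 2*ε * ∑ t, r t * (-(∑ ℓ, X t ℓ.1 * γhat ℓ)))
          + lam * ((1-ε) * ∑ ℓ, |γhat ℓ| - ∑ ℓ, |γhat ℓ|)
          = ε * (((1/(N:ℝ)) * ∑ t, r t * (∑ ℓ, X t ℓ.1 * γhat ℓ)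
              + ε * ((1/(2*(N:ℝ))) * ∑ t, (∑ ℓ, X t ℓ.1 * γhat ℓ)^2))
              - lam * ∑ ℓ, |γhat ℓ|) := by
        have e1 : ∑ t, (-(∑ ℓ, X t ℓ.1 * γhat ℓ))^2 = ∑ t, (∑ ℓ, X t ℓ.1 * γhat ℓ)^2 :=
          Finset.sum_congr rfl fun t _ => by ring
        have e2 : ∑ t, r t * (-(∑ ℓ, X t ℓ.1 * γhat ℓ))
            = -∑ t, r t * (∑ ℓ, X t ℓ.1 * γhat ℓ) := by
          rw [← Finset.sum_neg_distrib]
          exact Finset.sum_congr rfl fun t _ => by ring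
        rw [e1, e2]
        field_simp
        ring
      rw [key] at h
      nlinarith [h]
    linarith
  -- T ℓ = (1/τsq) * s ℓ
  have hT : ∀ ℓ : Fin q, ∑ m, ((1 / (N:ℝ)) * ∑ t, X t ℓ * X t m) * Θhat m
      = (1/τsq) * ((1/(N:ℝ)) * ∑ t, X t ℓ * r t) := by
    intro ℓ
    have hΘj : Θhat j = 1/τsq := by rw [hΘ j]; simp
    have hΘm : ∀ m : {ℓ : Fin q // ℓ ≠ j}, Θhat m.1 = -γhat m / τsq := by
      intro m; rw [hΘ m.1]; simp [m.2]
    have step1 : ∑ m, ((1 / (N:ℝ)) * ∑ t, X t ℓ * X t m) * Θhat m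
        = ((1 / (N:ℝ)) * ∑ t, X t ℓ * X t j) * (1/τsq)
          + ∑ m : {ℓ : Fin q // ℓ ≠ j},
              ((1 / (N:ℝ)) * ∑ t, X t ℓ * X t m.1) * (-γhat m / τsq) := by
      have := sum_split_ne j (fun m => ((1 / (N:ℝ)) * ∑ t, X t ℓ * X t m) * Θhat m)
      rw [this, hΘj]
      congr 1
      exact Finset.sum_congr rfl fun m _ => by rw [hΘm m]
    have swap : ∑ t, X t ℓ * (∑ ℓ' : {ℓ : Fin q // ℓ ≠ j}, X t ℓ'.1 * γhat ℓ')
        = ∑ ℓ' : {ℓ : Fin q // ℓ ≠ j}, (∑ t, X t ℓ * X t ℓ'.1) * γhat ℓ' := by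
      simp_rw [Finset.mul_sum, Finset.sum_mul]
      rw [Finset.sum_comm]
      exact Finset.sum_congr rfl fun t _ => Finset.sum_congr rfl fun ℓ' _ => by ring
    have hrs : ∑ t, X t ℓ * r t
        = ∑ t, X t ℓ * X t j
          - ∑ ℓ' : {ℓ : Fin q // ℓ ≠ j}, (∑ t, X t ℓ * X t ℓ'.1) * γhat ℓ' := by
      rw [← swap, ← Finset.sum_sub_distrib]
      exact Finset.sum_congr rfl fun t _ => by simp only [hr]; ring
    have e3 : ∑ m : {ℓ : Fin q // ℓ ≠ j},
          ((1 / (N:ℝ)) * ∑ t, X t ℓ * X t m.1) * (-γhat m / τsq)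
        = -((1/τsq) * ((1/(N:ℝ))
            * ∑ m : {ℓ : Fin q // ℓ ≠ j}, (∑ t, X t ℓ * X t m.1) * γhat m)) := by
      rw [Finset.mul_sum, Finset.mul_sum, ← Finset.sum_neg_distrib]
      exact Finset.sum_congr rfl fun m _ => by ring
    rw [step1, e3, hrs]
    ring
  intro ℓ
  by_cases hℓ : ℓ = j
  · subst hℓ
    have hsj : (1/(N:ℝ)) * ∑ t, X t ℓ * r t = τsq := by
      have e : ∑ t, X t ℓ * r t
          = ∑ t, (r t)^2 + ∑ t, r t * (∑ ℓ', X t ℓ'.1 * γhat ℓ') := by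
        rw [← Finset.sum_add_distrib]
        exact Finset.sum_congr rfl fun t _ => by simp only [hr]; ring
      have hbase : ∑ t, (X t ℓ - ∑ ℓ', X t ℓ'.1 * γhat ℓ') ^ 2 = ∑ t, (r t)^2 := rfl
      rw [hbase] at hτ
      rw [e, mul_add, hAL, hτ]
    rw [hT, hsj, if_pos rfl]
    rw [one_div, inv_mul_cancel₀ hτpos.ne', sub_self, abs_zero]
    positivity
  · rw [hT, if_neg hℓ]
    have hb := hkkt ⟨ℓ, hℓ⟩
    rw [zero_sub, abs_neg, abs_mul, abs_of_pos (by positivity : (0:ℝ) < 1/τsq)]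
    calc (1/τsq) * |(1/(N:ℝ)) * ∑ t, X t ℓ * r t| ≤ (1/τsq) * lam :=
          mul_le_mul_of_nonneg_left hb (by positivity)
      _ = lam / τsq := by ring
end
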